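/- arXiv:1505.05675 — 3 statements merged into one kernel-verified Lean document; each statement's English description precedes it below -/
import Mathlib

section
/- If a metric graph G is (k,m)-edge-chordal for constants k,m ≥ 0, then G is ε-densely (k,m)-path-chordal; moreover one may take ε = k/2, i.e., for every cycle C in G with L(C) ≥ k and every point p ∈ C, there exists an edge-shortcut of C of length at most m having an endpoint in the ball B_C(p, k/2) taken with respect to the length metric d_C on C. -/
open SimpleGraph

namespace Chordality

variable {V : Type*} {G : SimpleGraph V}

/-- The length of a walk in a graph whose edge `e` has length `ℓ e`. -/
noncomputable def wlen (ℓ : Sym2 V → ℝ) {u v : V} (w : G.Walk u v) : ℝ :=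
  (w.edges.map ℓ).sum

/-- The path metric of a metric graph: the infimum of the lengths of walks joining
two vertices. -/
noncomputable def gdist (G : SimpleGraph V) (ℓ : Sym2 V → ℝ) (u v : V) : ℝ :=
  sInf {x : ℝ | ∃ w : G.Walk u v, wlen ℓ w = x}

/-- A walk is geodesic if its length realizes the path metric between its endpoints. -/
def IsGeodesicWalk (ℓ : Sym2 V → ℝ) {u v : V} (w : G.Walk u v) : Prop :=
  wlen ℓ w = gdist G ℓ u v

/-- `G`, with edge lengths `ℓ`, is a metric graph: connected, locally finite,
with positive edge lengths. -/
def IsMetricGraph (G : SimpleGraph V) (ℓ : Sym2 V → ℝ) : Prop :=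
  G.Connected ∧ (∀ e ∈ G.edgeSet, 0 < ℓ e) ∧ ∀ v : V, (G.neighborSet v).Finite

/-- A walk lies inside the closed walk `c`. -/
def WalkIn {z u v : V} (c : G.Walk z z) (w : G.Walk u v) : Prop :=
  (∀ e ∈ w.edges, e ∈ c.edges) ∧ ∀ a ∈ w.support, a ∈ c.support

/-- The length metric `d_C` of a cycle `c`, evaluated on vertices of `c`:
the infimum of lengths of walks joining `u` and `v` inside `c`. -/
noncomputable def cdist (ℓ : Sym2 V → ℝ) {z : V} (c : G.Walk z z) (u v : V) : ℝ :=
  sInf {x : ℝ | ∃ w : G.Walk u v, WalkIn c w ∧ wlen ℓ w = x}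

/-- `σ` is a shortcut of the cycle `c`: a path joining two vertices `p, q` of `c`
with `L(σ) < d_C(p, q)`. -/
def IsShortcut (ℓ : Sym2 V → ℝ) {z p q : V} (c : G.Walk z z) (σ : G.Walk p q) : Prop :=
  σ.IsPath ∧ p ∈ c.support ∧ q ∈ c.support ∧ wlen ℓ σ < cdist ℓ c p q

/-- `σ` is a strict shortcut of `c`: a shortcut meeting `c` only at its endpoints. -/
def IsStrictShortcut (ℓ : Sym2 V → ℝ) {z p q : V} (c : G.Walk z z) (σ : G.Walk p q) : Prop :=
  IsShortcut ℓ c σ ∧ ∀ a ∈ σ.support, a ∈ c.support → a = p ∨ a = q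

/-- `v` is a shortcut vertex of `c`, i.e. an endpoint of some strict shortcut of `c`. -/
def ShortcutVertex (ℓ : Sym2 V → ℝ) {z : V} (c : G.Walk z z) (v : V) : Prop :=
  ∃ (p q : V) (σ : G.Walk p q), IsStrictShortcut ℓ c σ ∧ (v = p ∨ v = q)

/-- `v` is a shortcut vertex of `c` associated to a strict shortcut of length at most `m`. -/
def ShortcutVertexLe (ℓ : Sym2 V → ℝ) {z : V} (c : G.Walk z z) (m : ℝ) (v : V) : Prop :=
  ∃ (p q : V) (σ : G.Walk p q),
    IsStrictShortcut ℓ c σ ∧ wlen ℓ σ ≤ m ∧ (v = p ∨ v = q)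

/-- `(k,m)`-edge-chordal: every cycle of length at least `k` has a shortcut consisting of
a single edge of length at most `m`. -/
def EdgeChordal (G : SimpleGraph V) (ℓ : Sym2 V → ℝ) (k m : ℝ) : Prop :=
  ∀ (z : V) (c : G.Walk z z), c.IsCycle → k ≤ wlen ℓ c →
    ∃ (p q : V) (h : G.Adj p q),
      IsShortcut ℓ c (Walk.cons h Walk.nil) ∧ ℓ s(p, q) ≤ m

/-- `k`-path-chordal: every cycle of length at least `k` admits a shortcut. -/
def PathChordal (G : SimpleGraph V) (ℓ : Sym2 V → ℝ) (k : ℝ) : Prop :=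
  ∀ (z : V) (c : G.Walk z z), c.IsCycle → k ≤ wlen ℓ c →
    ∃ (p q : V) (σ : G.Walk p q), IsShortcut ℓ c σ

/-- `(k,m)`-path-chordal: every cycle of length at least `k` admits a shortcut of length
at most `m`. -/
def PathChordalLe (G : SimpleGraph V) (ℓ : Sym2 V → ℝ) (k m : ℝ) : Prop :=
  ∀ (z : V) (c : G.Walk z z), c.IsCycle → k ≤ wlen ℓ c →
    ∃ (p q : V) (σ : G.Walk p q), IsShortcut ℓ c σ ∧ wlen ℓ σ ≤ m

/-- `ε`-densely `(k,m)`-path-chordal: on every cycle of length at least `k`, the vertices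
that are shortcut vertices of strict shortcuts of length at most `m` form an `ε`-dense
subset of `(C, d_C)`. -/
def DenselyPathChordal (G : SimpleGraph V) (ℓ : Sym2 V → ℝ) (ε k m : ℝ) : Prop :=
  ∀ (z : V) (c : G.Walk z z), c.IsCycle → k ≤ wlen ℓ c →
    ∀ x ∈ c.support, ∃ v, ShortcutVertexLe ℓ c m v ∧ cdist ℓ c v x < ε

/-- `ε`-densely `k`-path-chordal: on every cycle of length at least `k`, the shortcut
vertices (of strict shortcuts, with no bound on their lengths) form an `ε`-dense subset
of `(C, d_C)`. -/
def DenselyKPathChordal (G : SimpleGraph V) (ℓ : Sym2 V → ℝ) (ε k : ℝ) : Prop :=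
  ∀ (z : V) (c : G.Walk z z), c.IsCycle → k ≤ wlen ℓ c →
    ∀ x ∈ c.support, ∃ v, ShortcutVertex ℓ c v ∧ cdist ℓ c v x < ε

/-- The geodesic triangle with sides `g1, g2, g3` is `δ`-thin: each side is contained in
the `δ`-neighborhood of the union of the other two sides. -/
def ThinTriangle (ℓ : Sym2 V → ℝ) (δ : ℝ) {x y z : V}
    (g1 : G.Walk x y) (g2 : G.Walk y z) (g3 : G.Walk z x) : Prop :=
  (∀ p ∈ g1.support, ∃ q, (q ∈ g2.support ∨ q ∈ g3.support) ∧ gdist G ℓ p q ≤ δ) ∧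
  (∀ p ∈ g2.support, ∃ q, (q ∈ g3.support ∨ q ∈ g1.support) ∧ gdist G ℓ p q ≤ δ) ∧
  (∀ p ∈ g3.support, ∃ q, (q ∈ g1.support ∨ q ∈ g2.support) ∧ gdist G ℓ p q ≤ δ)

/-- `G` is `δ`-hyperbolic: every geodesic triangle is `δ`-thin. -/
def Hyperbolic (G : SimpleGraph V) (ℓ : Sym2 V → ℝ) (δ : ℝ) : Prop :=
  ∀ (x y z : V) (g1 : G.Walk x y) (g2 : G.Walk y z) (g3 : G.Walk z x),
    IsGeodesicWalk ℓ g1 → IsGeodesicWalk ℓ g2 → IsGeodesicWalk ℓ g3 →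
    ThinTriangle ℓ δ g1 g2 g3

/-- The sharp hyperbolicity constant `δ(G)`. -/
noncomputable def hypConst (G : SimpleGraph V) (ℓ : Sym2 V → ℝ) : ℝ :=
  sInf {δ : ℝ | 0 ≤ δ ∧ Hyperbolic G ℓ δ}

/-- A walk lies inside the geodesic triangle with sides `g1, g2, g3`. -/
def WalkInTri {x y z u v : V} (g1 : G.Walk x y) (g2 : G.Walk y z) (g3 : G.Walk z x)
    (w : G.Walk u v) : Prop :=
  (∀ e ∈ w.edges, e ∈ g1.edges ∨ e ∈ g2.edges ∨ e ∈ g3.edges) ∧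
  ∀ a ∈ w.support, a ∈ g1.support ∨ a ∈ g2.support ∨ a ∈ g3.support

/-- The length metric `d_T` of the geodesic triangle with sides `g1, g2, g3`,
evaluated on vertices of the triangle. -/
noncomputable def tdist (ℓ : Sym2 V → ℝ) {x y z : V} (g1 : G.Walk x y) (g2 : G.Walk y z)
    (g3 : G.Walk z x) (u v : V) : ℝ :=
  sInf {r : ℝ | ∃ w : G.Walk u v, WalkInTri g1 g2 g3 w ∧ wlen ℓ w = r}

/-- `σ` is a shortcut of the geodesic triangle with sides `g1, g2, g3`: a path joining
two vertices `p, q` of the triangle with `L(σ) < d_T(p, q)`. -/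
def IsTriShortcut (ℓ : Sym2 V → ℝ) {x y z p q : V} (g1 : G.Walk x y) (g2 : G.Walk y z)
    (g3 : G.Walk z x) (σ : G.Walk p q) : Prop :=
  σ.IsPath ∧ (p ∈ g1.support ∨ p ∈ g2.support ∨ p ∈ g3.support) ∧
    (q ∈ g1.support ∨ q ∈ g2.support ∨ q ∈ g3.support) ∧
    wlen ℓ σ < tdist ℓ g1 g2 g3 p q

/-- `v` is a shortcut vertex of the triangle, associated to a shortcut of length
at most `m`. -/
def TriShortcutVertexLe (ℓ : Sym2 V → ℝ) {x y z : V} (g1 : G.Walk x y) (g2 : G.Walk y z)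
    (g3 : G.Walk z x) (m : ℝ) (v : V) : Prop :=
  ∃ (p q : V) (σ : G.Walk p q),
    IsTriShortcut ℓ g1 g2 g3 σ ∧ wlen ℓ σ ≤ m ∧ (v = p ∨ v = q)

/-- `ε`-densely `(k,m)`-path-chordal on the triangles: for every geodesic triangle of
total length at least `k`, the shortcut vertices of shortcuts of length at most `m`
form an `ε`-dense subset of `(T, d_T)`. -/
def DenselyPathChordalOnTriangles (G : SimpleGraph V) (ℓ : Sym2 V → ℝ) (ε k m : ℝ) : Prop :=
  ∀ (x y z : V) (g1 : G.Walk x y) (g2 : G.Walk y z) (g3 : G.Walk z x),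
    IsGeodesicWalk ℓ g1 → IsGeodesicWalk ℓ g2 → IsGeodesicWalk ℓ g3 →
    k ≤ wlen ℓ g1 + wlen ℓ g2 + wlen ℓ g3 →
    ∀ p, (p ∈ g1.support ∨ p ∈ g2.support ∨ p ∈ g3.support) →
      ∃ v, TriShortcutVertexLe ℓ g1 g2 g3 m v ∧ tdist ℓ g1 g2 g3 v p < ε

end Chordality

/-!
Take an edge-shortcut `pq` of `C` of length at most `m`. If neither endpoint lies within
`k/2` of `x`, cut `C` at `p, q` and close the arc through `x` with the chord `pq`. This
cycle `C'` has fewer edges, and its length is at least `d_C(p, x) + d_C(x, q) ≥ k`, so by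
induction it has an edge-shortcut of length at most `m` with an endpoint within `k/2` of
`x` in `d_{C'}`. That edge is still a shortcut of `C`, because `d_{C'} ≤ d_C` on `C'`: the
dropped arc is longer than the chord replacing it. And distances from `x` below `k/2` agree
in `C` and `C'`, because a walk in `C'` that uses the chord has already travelled `k/2`
from `x`. Both comparisons evaluate, at the two ends of a walk, a function that grows by at
most `ℓ e` along each edge `e`.
-/

namespace Chordality

section

variable {V : Type*} {G : SimpleGraph V} {ℓ : Sym2 V → ℝ}

@[simp] lemma wlen_nil {u : V} : wlen ℓ (Walk.nil : G.Walk u u) = 0 := by simp [wlen]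

@[simp] lemma wlen_cons {u v w : V} (h : G.Adj u v) (p : G.Walk v w) :
    wlen ℓ (Walk.cons h p) = ℓ s(u, v) + wlen ℓ p := by simp [wlen]

lemma wlen_append {u v w : V} (p : G.Walk u v) (q : G.Walk v w) :
    wlen ℓ (p.append q) = wlen ℓ p + wlen ℓ q := by simp [wlen]

@[simp] lemma wlen_reverse {u v : V} (p : G.Walk u v) : wlen ℓ p.reverse = wlen ℓ p := by
  simp [wlen, List.map_reverse]

lemma wlen_nonneg (hℓ : ∀ e ∈ G.edgeSet, 0 ≤ ℓ e) {u v : V} (w : G.Walk u v) :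
    0 ≤ wlen ℓ w :=
  List.sum_nonneg <| by
    simp only [List.mem_map]
    rintro _ ⟨e, he, rfl⟩
    exact hℓ e (w.edges_subset_edgeSet he)

lemma le_add_wlen_of_forall_mem_edges {g : V → ℝ} {u v : V} (w : G.Walk u v)
    (hg : ∀ y y', s(y, y') ∈ w.edges → g y ≤ g y' + ℓ s(y, y')) :
    g u ≤ g v + wlen ℓ w := by
  induction w with
  | nil => simp
  | @cons u v w h p ih =>
    have hfirst := hg u v (by simp)
    have hrest := ih fun y y' he => hg y y' (by simp [he])
    simp only [wlen_cons]
    linarith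

section WalkIn

variable {z : V} {c : G.Walk z z}

lemma walkIn_self : WalkIn c c := ⟨fun _ => id, fun _ => id⟩

lemma WalkIn.nil {u : V} (hu : u ∈ c.support) : WalkIn c (Walk.nil : G.Walk u u) :=
  ⟨by simp, by simpa using hu⟩

lemma WalkIn.cons {u v w : V} {h : G.Adj u v} {p : G.Walk v w} (he : s(u, v) ∈ c.edges)
    (hp : WalkIn c p) : WalkIn c (Walk.cons h p) := by
  refine ⟨?_, ?_⟩
  · simpa [he] using hp.1
  · simpa [c.fst_mem_support_of_mem_edges he] using hp.2

lemma WalkIn.append {u v w : V} {p : G.Walk u v} {q : G.Walk v w} (hp : WalkIn c p)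
    (hq : WalkIn c q) : WalkIn c (p.append q) := by
  refine ⟨fun e he => ?_, fun y hy => ?_⟩
  · rw [Walk.edges_append, List.mem_append] at he
    exact he.elim (hp.1 e) (hq.1 e)
  · rw [Walk.mem_support_append_iff] at hy
    exact hy.elim (hp.2 y) (hq.2 y)

lemma WalkIn.reverse {u v : V} {w : G.Walk u v} (hw : WalkIn c w) : WalkIn c w.reverse :=
  ⟨fun e he => hw.1 e (by simpa using he), fun y hy => hw.2 y (by simpa using hy)⟩

lemma WalkIn.takeUntil [DecidableEq V] {u v x : V} {w : G.Walk u v} (hw : WalkIn c w)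
    (hx : x ∈ w.support) : WalkIn c (w.takeUntil x hx) :=
  ⟨fun e he => hw.1 e (w.edges_takeUntil_subset_edges hx he),
    fun y hy => hw.2 y (w.support_takeUntil_subset_support hx hy)⟩

lemma WalkIn.dropUntil [DecidableEq V] {u v x : V} {w : G.Walk u v} (hw : WalkIn c w)
    (hx : x ∈ w.support) : WalkIn c (w.dropUntil x hx) :=
  ⟨fun e he => hw.1 e (w.edges_dropUntil_subset_edges hx he),
    fun y hy => hw.2 y (w.support_dropUntil_subset_support hx hy)⟩

lemma exists_walkIn {u v : V} (hu : u ∈ c.support) (hv : v ∈ c.support) :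
    ∃ w : G.Walk u v, WalkIn c w := by
  classical
  exact ⟨_, (walkIn_self.takeUntil hu).reverse.append (walkIn_self.takeUntil hv)⟩

end WalkIn

section CycleDist

variable {z : V} {c : G.Walk z z}

lemma cdist_le (hℓ : ∀ e ∈ G.edgeSet, 0 ≤ ℓ e) {u v : V} {w : G.Walk u v}
    (hw : WalkIn c w) : cdist ℓ c u v ≤ wlen ℓ w :=
  csInf_le ⟨0, by rintro _ ⟨w', -, rfl⟩; exact wlen_nonneg hℓ w'⟩ ⟨w, hw, rfl⟩

lemma le_cdist {u v : V} {r : ℝ} (hu : u ∈ c.support) (hv : v ∈ c.support)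
    (h : ∀ w : G.Walk u v, WalkIn c w → r ≤ wlen ℓ w) : r ≤ cdist ℓ c u v := by
  obtain ⟨w, hw⟩ := exists_walkIn hu hv
  exact le_csInf ⟨_, w, hw, rfl⟩ (by rintro _ ⟨w', hw', rfl⟩; exact h w' hw')

lemma cdist_nonneg (hℓ : ∀ e ∈ G.edgeSet, 0 ≤ ℓ e) (u v : V) : 0 ≤ cdist ℓ c u v :=
  Real.sInf_nonneg <| by rintro _ ⟨w, -, rfl⟩; exact wlen_nonneg hℓ w

lemma cdist_self (hℓ : ∀ e ∈ G.edgeSet, 0 ≤ ℓ e) {u : V} (hu : u ∈ c.support) :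
    cdist ℓ c u u = 0 :=
  le_antisymm (by simpa using cdist_le hℓ (WalkIn.nil hu)) (cdist_nonneg hℓ u u)

lemma cdist_comm (u v : V) : cdist ℓ c u v = cdist ℓ c v u := by
  unfold cdist
  congr 1
  ext r
  constructor <;> rintro ⟨w, hw, rfl⟩ <;> exact ⟨w.reverse, hw.reverse, wlen_reverse w⟩

lemma cdist_le_add_of_mem_edges (hℓ : ∀ e ∈ G.edgeSet, 0 ≤ ℓ e) {u u' v : V}
    (he : s(u, u') ∈ c.edges) (hv : v ∈ c.support) :
    cdist ℓ c u v ≤ cdist ℓ c u' v + ℓ s(u, u') := by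
  have hadj : G.Adj u u' := c.adj_of_mem_edges he
  suffices cdist ℓ c u v - ℓ s(u, u') ≤ cdist ℓ c u' v by linarith
  refine le_cdist (c.snd_mem_support_of_mem_edges he) hv fun w hw => ?_
  have := cdist_le hℓ (hw.cons (h := hadj) he)
  rw [wlen_cons] at this
  linarith

lemma le_add_cdist_of_forall_mem_edges {g : V → ℝ} {u v : V} (hu : u ∈ c.support)
    (hv : v ∈ c.support) (hg : ∀ y y', s(y, y') ∈ c.edges → g y ≤ g y' + ℓ s(y, y')) :
    g u ≤ g v + cdist ℓ c u v := by
  suffices g u - g v ≤ cdist ℓ c u v by linarith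
  refine le_cdist hu hv fun w hw => ?_
  have := le_add_wlen_of_forall_mem_edges w fun y y' he => hg y y' (hw.1 _ he)
  linarith

lemma cdist_add_cdist_le_wlen (hℓ : ∀ e ∈ G.edgeSet, 0 ≤ ℓ e) {u v x : V} {w : G.Walk u v}
    (hw : WalkIn c w) (hx : x ∈ w.support) :
    cdist ℓ c u x + cdist ℓ c x v ≤ wlen ℓ w := by
  classical
  rw [← w.take_spec hx, wlen_append]
  exact add_le_add (cdist_le hℓ (hw.takeUntil hx)) (cdist_le hℓ (hw.dropUntil hx))

end CycleDist

lemma isStrictShortcut_cons_nil_iff {z p q : V} {c : G.Walk z z} (h : G.Adj p q) :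
    IsStrictShortcut ℓ c (Walk.cons h Walk.nil) ↔ IsShortcut ℓ c (Walk.cons h Walk.nil) :=
  ⟨And.left, fun hs => ⟨hs, by simp⟩⟩

lemma two_le_length_of_ne {u v : V} (w : G.Walk u v) (hne : u ≠ v)
    (hno : s(u, v) ∉ w.edges) : 2 ≤ w.length := by
  rcases w with _ | ⟨_, _ | ⟨_, _⟩⟩
  · exact absurd rfl hne
  · simp at hno
  · simp

/-- Up to rotation, `c` traverses `w₁` and then `w₂`. -/
structure IsArcSplit {z a b : V} (c : G.Walk z z) (w₁ : G.Walk a b) (w₂ : G.Walk b a) :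
    Prop where
  mem_edges : ∀ e, e ∈ c.edges ↔ e ∈ w₁.edges ∨ e ∈ w₂.edges
  mem_support : ∀ v, v ∈ c.support ↔ v ∈ w₁.support ∨ v ∈ w₂.support
  eq_or_eq_of_mem : ∀ v ∈ w₁.support, v ∈ w₂.support → v = a ∨ v = b
  length_eq : c.length = w₁.length + w₂.length

namespace IsArcSplit

variable {z a b : V} {c : G.Walk z z} {w₁ : G.Walk a b} {w₂ : G.Walk b a}

lemma symm (hs : IsArcSplit c w₁ w₂) : IsArcSplit c w₂ w₁ where
  mem_edges e := (hs.mem_edges e).trans or_comm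
  mem_support v := (hs.mem_support v).trans or_comm
  eq_or_eq_of_mem v h₂ h₁ := (hs.eq_or_eq_of_mem v h₁ h₂).symm
  length_eq := hs.length_eq.trans (add_comm _ _)

lemma walkIn_left (hs : IsArcSplit c w₁ w₂) : WalkIn c w₁ :=
  ⟨fun e he => (hs.mem_edges e).2 (.inl he), fun v hv => (hs.mem_support v).2 (.inl hv)⟩

end IsArcSplit

lemma _root_.SimpleGraph.Walk.IsCycle.exists_isArcSplit {z p q : V} {c : G.Walk z z}
    (hc : c.IsCycle) (hp : p ∈ c.support) (hq : q ∈ c.support) (hpq : p ≠ q) :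
    ∃ (w₁ : G.Walk p q) (w₂ : G.Walk q p), IsArcSplit c w₁ w₂ ∧ w₁.IsPath ∧ w₂.IsPath := by
  classical
  have hc' : (c.rotate p hp).IsCycle := hc.rotate hp
  have hq' : q ∈ (c.rotate p hp).support := (c.mem_support_rotate_iff p hp).2 hq
  have hspec := (c.rotate p hp).take_spec hq'
  set w₁ := (c.rotate p hp).takeUntil q hq'
  set w₂ := (c.rotate p hp).dropUntil q hq'
  have hnodup := hc'.support_nodup
  rw [← hspec, Walk.tail_support_append, List.nodup_append] at hnodup
  refine ⟨w₁, w₂, ⟨fun e => ?_, fun v => ?_, fun v h₁ h₂ => ?_, ?_⟩, hc'.isPath_takeUntil hq',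
    (hspec ▸ hc').isPath_of_append_right (Walk.not_nil_of_ne hpq)⟩
  · rw [← (c.rotate_edges p hp).perm.mem_iff, ← hspec, Walk.edges_append, List.mem_append]
  · rw [← c.mem_support_rotate_iff p hp, ← hspec, Walk.mem_support_append_iff]
  · rw [← Walk.cons_tail_support, List.mem_cons] at h₁ h₂
    rcases h₁ with rfl | h₁
    · exact .inl rfl
    rcases h₂ with rfl | h₂
    · exact .inr rfl
    exact absurd rfl (hnodup.2.2 v h₁ v h₂)
  · rw [← c.length_rotate p hp, ← hspec, Walk.length_append]

def HasEdgeShortcutNear {z : V} (ℓ : Sym2 V → ℝ) (c : G.Walk z z) (m r : ℝ) (x : V) : Prop :=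
  ∃ (p q : V) (h : G.Adj p q), IsShortcut ℓ c (Walk.cons h Walk.nil) ∧ ℓ s(p, q) ≤ m ∧
    (cdist ℓ c p x < r ∨ cdist ℓ c q x < r)

lemma HasEdgeShortcutNear.exists_shortcutVertexLe {z x : V} {c : G.Walk z z} {m r : ℝ}
    (h : HasEdgeShortcutNear ℓ c m r x) : ∃ v, ShortcutVertexLe ℓ c m v ∧ cdist ℓ c v x < r := by
  obtain ⟨p, q, hpq, hsc, hm, hpx | hqx⟩ := h
  · exact ⟨p, ⟨p, q, _, (isStrictShortcut_cons_nil_iff hpq).2 hsc, by simpa using hm, .inl rfl⟩,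
      hpx⟩
  · exact ⟨q, ⟨p, q, _, (isStrictShortcut_cons_nil_iff hpq).2 hsc, by simpa using hm, .inr rfl⟩,
      hqx⟩

section Chord

variable {z a b : V} {c : G.Walk z z} (hab : G.Adj a b) {w₁ : G.Walk a b} {w₂ : G.Walk b a}

lemma mem_support_cons_symm_iff {v : V} :
    v ∈ (Walk.cons hab.symm w₁).support ↔ v ∈ w₁.support := by
  simp only [Walk.support_cons, List.mem_cons, or_iff_right_iff_imp]
  rintro rfl
  exact w₁.end_mem_support

lemma IsArcSplit.length_cons_lt (hs : IsArcSplit c w₁ w₂) (hab_c : s(a, b) ∉ c.edges) :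
    (Walk.cons hab.symm w₁).length < c.length := by
  have : 2 ≤ w₂.length := two_le_length_of_ne w₂ hab.ne.symm fun h =>
    hab_c ((hs.mem_edges _).2 (.inr (Sym2.eq_swap ▸ h)))
  rw [Walk.length_cons, hs.length_eq]
  omega

lemma IsArcSplit.isCycle_cons (hs : IsArcSplit c w₁ w₂) (hab_c : s(a, b) ∉ c.edges)
    (hw₁ : w₁.IsPath) : (Walk.cons hab.symm w₁).IsCycle :=
  (Walk.cons_isCycle_iff w₁ hab.symm).2
    ⟨hw₁, fun h => hab_c (hs.walkIn_left.1 _ (Sym2.eq_swap ▸ h))⟩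

lemma IsArcSplit.cdist_add_cdist_le_wlen_cons (hℓ : ∀ e ∈ G.edgeSet, 0 ≤ ℓ e)
    (hs : IsArcSplit c w₁ w₂) {x : V} (hx : x ∈ w₁.support) :
    cdist ℓ c a x + cdist ℓ c b x ≤ wlen ℓ (Walk.cons hab.symm w₁) := by
  have := cdist_add_cdist_le_wlen hℓ hs.walkIn_left hx
  have := hℓ s(b, a) hab.symm
  rw [wlen_cons, cdist_comm b x]
  linarith

lemma IsArcSplit.le_add_cdist_of_glue (hs : IsArcSplit c w₁ w₂) {f₁ f₂ : V → ℝ}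
    (hf₁ : ∀ y y', s(y, y') ∈ w₁.edges → f₁ y ≤ f₁ y' + ℓ s(y, y'))
    (hf₂ : ∀ y y', s(y, y') ∈ w₂.edges → f₂ y ≤ f₂ y' + ℓ s(y, y'))
    (ha : f₁ a = f₂ a) (hb : f₁ b = f₂ b) {u v : V} (hu : u ∈ w₁.support)
    (hv : v ∈ w₁.support) : f₁ u ≤ f₁ v + cdist ℓ c u v := by
  classical
  let g : V → ℝ := fun y => if y ∈ w₁.support then f₁ y else f₂ y
  have hg₁ : ∀ y ∈ w₁.support, g y = f₁ y := fun y hy => if_pos hy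
  have hg₂ : ∀ y ∈ w₂.support, g y = f₂ y := fun y hy => by
    by_cases hy₁ : y ∈ w₁.support
    · rcases hs.eq_or_eq_of_mem y hy₁ hy with rfl | rfl
      exacts [(hg₁ _ hy₁).trans ha, (hg₁ _ hy₁).trans hb]
    · exact if_neg hy₁
  have hg : ∀ y y', s(y, y') ∈ c.edges → g y ≤ g y' + ℓ s(y, y') := fun y y' he => by
    rcases (hs.mem_edges _).1 he with he₁ | he₂
    · rw [hg₁ y (w₁.fst_mem_support_of_mem_edges he₁),
        hg₁ y' (w₁.snd_mem_support_of_mem_edges he₁)]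
      exact hf₁ y y' he₁
    · rw [hg₂ y (w₂.fst_mem_support_of_mem_edges he₂),
        hg₂ y' (w₂.snd_mem_support_of_mem_edges he₂)]
      exact hf₂ y y' he₂
  have hwalk := hs.walkIn_left
  simpa only [hg₁ u hu, hg₁ v hv] using le_add_cdist_of_forall_mem_edges (hwalk.2 u hu)
    (hwalk.2 v hv) hg

/-- Glue the `d_{C'}`-distance to `q` on the kept arc `w₁` with the cheapest detour through `a`
or `b` on the dropped arc `w₂`; the two agree at `a` and `b` because the chord is short. -/
lemma IsArcSplit.cdist_cons_le (hℓ : ∀ e ∈ G.edgeSet, 0 ≤ ℓ e) (hs : IsArcSplit c w₁ w₂)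
    (hchord : ℓ s(a, b) < cdist ℓ c a b) {p q : V} (hp : p ∈ w₁.support)
    (hq : q ∈ w₁.support) :
    cdist ℓ (Walk.cons hab.symm w₁) p q ≤ cdist ℓ c p q := by
  set c' := Walk.cons hab.symm w₁
  have hmem : ∀ {v}, v ∈ w₁.support → v ∈ c.support := hs.walkIn_left.2 _
  let D : V → ℝ := fun y => cdist ℓ c' y q
  let detour : V → ℝ := fun y => min (cdist ℓ c y a + D a) (cdist ℓ c y b + D b)
  have hD : ∀ y y', s(y, y') ∈ c'.edges → D y ≤ D y' + ℓ s(y, y') := fun _ _ he =>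
    cdist_le_add_of_mem_edges hℓ he ((mem_support_cons_symm_iff hab).2 hq)
  have hDab : D a ≤ D b + ℓ s(a, b) := hD a b (by simp [c', Sym2.eq_swap])
  have hDba : D b ≤ D a + ℓ s(a, b) := by simpa [Sym2.eq_swap] using hD b a (by simp [c'])
  have hdetour : ∀ y y', s(y, y') ∈ w₂.edges → detour y ≤ detour y' + ℓ s(y, y') :=
      fun y y' he => by
    have he : s(y, y') ∈ c.edges := (hs.mem_edges _).2 (.inr he)
    have ha := cdist_le_add_of_mem_edges hℓ he (hmem w₁.start_mem_support)
    have hb := cdist_le_add_of_mem_edges hℓ he (hmem w₁.end_mem_support)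
    show detour y ≤ min _ _ + _
    rw [← min_add_add_right]
    exact min_le_min (by linarith) (by linarith)
  have hca : cdist ℓ c a a = 0 := cdist_self hℓ (hmem w₁.start_mem_support)
  have hcb : cdist ℓ c b b = 0 := cdist_self hℓ (hmem w₁.end_mem_support)
  have hcomm := cdist_comm (ℓ := ℓ) (c := c) a b
  have hDa : D a = detour a :=
    le_antisymm (le_min (by linarith) (by linarith)) ((min_le_left _ _).trans (by simp [hca]))
  have hDb : D b = detour b :=
    le_antisymm (le_min (by linarith) (by linarith)) ((min_le_right _ _).trans (by simp [hcb]))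
  have hDq : D q = 0 := cdist_self hℓ ((mem_support_cons_symm_iff hab).2 hq)
  simpa [hDq] using hs.le_add_cdist_of_glue (fun y y' he => hD y y' (by simp [c', he]))
    hdetour hDa hDb hp hq

/-- The truncated distance `min (d_C(·, x)) r` is constant on the chord. -/
lemma IsArcSplit.min_cdist_le_cdist_cons (hℓ : ∀ e ∈ G.edgeSet, 0 ≤ ℓ e)
    (hs : IsArcSplit c w₁ w₂) {x : V} {r : ℝ} (hx : x ∈ w₁.support)
    (ha : r ≤ cdist ℓ c a x) (hb : r ≤ cdist ℓ c b x) {u : V} (hu : u ∈ w₁.support) :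
    min (cdist ℓ c u x) r ≤ cdist ℓ (Walk.cons hab.symm w₁) u x := by
  have hxc : x ∈ c.support := hs.walkIn_left.2 x hx
  let g : V → ℝ := fun y => min (cdist ℓ c y x) r
  have hg : ∀ y y', s(y, y') ∈ (Walk.cons hab.symm w₁).edges → g y ≤ g y' + ℓ s(y, y') := by
    intro y y' he
    rw [Walk.edges_cons, List.mem_cons] at he
    rcases he with hchord | he₁
    · have hy' : r ≤ cdist ℓ c y' x := by
        rcases Sym2.eq_iff.1 hchord with ⟨-, rfl⟩ | ⟨-, rfl⟩
        exacts [ha, hb]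
      have hℓyy' : 0 ≤ ℓ s(y, y') := hℓ _ (hchord ▸ hab.symm)
      calc g y ≤ r := min_le_right _ _
        _ = g y' := (min_eq_right hy').symm
        _ ≤ g y' + ℓ s(y, y') := le_add_of_nonneg_right hℓyy'
    · have := cdist_le_add_of_mem_edges hℓ (hs.walkIn_left.1 _ he₁) hxc
      have := hℓ _ (w₁.edges_subset_edgeSet he₁)
      show min _ _ ≤ min _ _ + _
      rw [← min_add_add_right]
      exact min_le_min (by linarith) (by linarith)
  have hgx : g x ≤ 0 := (min_le_left _ _).trans (cdist_self hℓ hxc).le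
  have := le_add_cdist_of_forall_mem_edges ((mem_support_cons_symm_iff hab).2 hu)
    ((mem_support_cons_symm_iff hab).2 hx) hg
  linarith

lemma IsArcSplit.hasEdgeShortcutNear_of_cons {x : V} {m r : ℝ} (hℓ : ∀ e ∈ G.edgeSet, 0 ≤ ℓ e)
    (hs : IsArcSplit c w₁ w₂) (hchord : ℓ s(a, b) < cdist ℓ c a b) (hx : x ∈ w₁.support)
    (ha : r ≤ cdist ℓ c a x) (hb : r ≤ cdist ℓ c b x)
    (h : HasEdgeShortcutNear ℓ (Walk.cons hab.symm w₁) m r x) :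
    HasEdgeShortcutNear ℓ c m r x := by
  obtain ⟨p, q, hpq, ⟨hσ, hp, hq, hlt⟩, hm, hnear⟩ := h
  rw [mem_support_cons_symm_iff hab] at hp hq
  refine ⟨p, q, hpq, ⟨hσ, hs.walkIn_left.2 p hp, hs.walkIn_left.2 q hq,
    hlt.trans_le (hs.cdist_cons_le hab hℓ hchord hp hq)⟩, hm, ?_⟩
  have hmin := fun {v} (hv : v ∈ w₁.support) (hvx : cdist ℓ (Walk.cons hab.symm w₁) v x < r) =>
    (min_lt_iff.1 ((hs.min_cdist_le_cdist_cons hab hℓ hx ha hb hv).trans_lt hvx)).resolve_right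
      (lt_irrefl r)
  exact hnear.imp (hmin hp) (hmin hq)

end Chord

theorem hasEdgeShortcutNear_of_edgeChordal {k m : ℝ} (hℓ : ∀ e ∈ G.edgeSet, 0 ≤ ℓ e)
    (hEC : EdgeChordal G ℓ k m) {z : V} (c : G.Walk z z) (hc : c.IsCycle) (hk : k ≤ wlen ℓ c)
    {x : V} (hx : x ∈ c.support) : HasEdgeShortcutNear ℓ c m (k / 2) x := by
  induction hn : c.length using Nat.strong_induction_on generalizing z c with
  | _ n ih =>
  obtain ⟨p, q, hpq, hsc, hm⟩ := hEC z c hc hk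
  by_cases hnear : cdist ℓ c p x < k / 2 ∨ cdist ℓ c q x < k / 2
  · exact ⟨p, q, hpq, hsc, hm, hnear⟩
  rw [not_or, not_lt, not_lt] at hnear
  have hchord : ℓ s(p, q) < cdist ℓ c p q := by simpa using hsc.2.2.2
  have hpq_c : s(p, q) ∉ c.edges := fun he => by
    have := cdist_le hℓ (WalkIn.cons (h := hpq) he (WalkIn.nil hsc.2.2.1))
    simp only [wlen_cons, wlen_nil, add_zero] at this
    linarith
  have key : ∀ {a b : V} (hab : G.Adj a b) (w₁ : G.Walk a b) (w₂ : G.Walk b a),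
      IsArcSplit c w₁ w₂ → w₁.IsPath → s(a, b) ∉ c.edges → ℓ s(a, b) < cdist ℓ c a b →
      k / 2 ≤ cdist ℓ c a x → k / 2 ≤ cdist ℓ c b x → x ∈ w₁.support →
      HasEdgeShortcutNear ℓ c m (k / 2) x := by
    intro a b hab w₁ w₂ hs hw₁ hab_c hchord ha hb hx₁
    have hk' : k ≤ wlen ℓ (Walk.cons hab.symm w₁) := by
      linarith [hs.cdist_add_cdist_le_wlen_cons hab hℓ hx₁]
    exact hs.hasEdgeShortcutNear_of_cons hab hℓ hchord hx₁ ha hb <|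
      ih _ (hn ▸ hs.length_cons_lt hab hab_c) _ (hs.isCycle_cons hab hab_c hw₁) hk'
        ((mem_support_cons_symm_iff hab).2 hx₁) rfl
  obtain ⟨w₁, w₂, hs, hw₁, hw₂⟩ := hc.exists_isArcSplit hsc.2.1 hsc.2.2.1 hpq.ne
  rcases (hs.mem_support x).1 hx with hx₁ | hx₂
  · exact key hpq w₁ w₂ hs hw₁ hpq_c hchord hnear.1 hnear.2 hx₁
  · exact key hpq.symm w₂ w₁ hs.symm hw₂ (Sym2.eq_swap ▸ hpq_c)
      (by rwa [Sym2.eq_swap, cdist_comm]) hnear.2 hnear.1 hx₂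

end

theorem edgeChordal_implies_denselyPathChordal_general
    {V : Type*} (G : SimpleGraph V) (ℓ : Sym2 V → ℝ) (hMG : IsMetricGraph G ℓ)
    (k m : ℝ) (hEC : EdgeChordal G ℓ k m) :
    DenselyPathChordal G ℓ (k / 2) k m ∧
    ∀ (z : V) (c : G.Walk z z), c.IsCycle → k ≤ wlen ℓ c →
      ∀ x ∈ c.support, ∃ (p q : V) (h : G.Adj p q),
        IsShortcut ℓ c (SimpleGraph.Walk.cons h SimpleGraph.Walk.nil) ∧ ℓ s(p, q) ≤ m ∧
        (cdist ℓ c p x < k / 2 ∨ cdist ℓ c q x < k / 2) := by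
  have hℓ : ∀ e ∈ G.edgeSet, 0 ≤ ℓ e := fun e he => (hMG.2.1 e he).le
  have hnear : ∀ (z : V) (c : G.Walk z z), c.IsCycle → k ≤ wlen ℓ c →
      ∀ x ∈ c.support, HasEdgeShortcutNear ℓ c m (k / 2) x :=
    fun _ c hc hk _ hx => hasEdgeShortcutNear_of_edgeChordal hℓ hEC c hc hk hx
  exact ⟨fun z c hc hk x hx => (hnear z c hc hk x hx).exists_shortcutVertexLe, hnear⟩

/-- If a metric graph `G` is `(k,m)`-edge-chordal, then it is
`ε`-densely `(k,m)`-path-chordal with `ε = k/2`: for every cycle `C` with `L(C) ≥ k`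
and every `x ∈ C`, there is an edge-shortcut of `C` of length at most `m` having an
endpoint in the ball `B_C(x, k/2)` for the length metric `d_C`. -/
theorem edgeChordal_implies_denselyPathChordal
    {V : Type*} (G : SimpleGraph V) (ℓ : Sym2 V → ℝ) (hMG : IsMetricGraph G ℓ)
    (k m : ℝ) (hk : 0 ≤ k) (hm : 0 ≤ m) (hEC : EdgeChordal G ℓ k m) :
    DenselyPathChordal G ℓ (k / 2) k m ∧
    ∀ (z : V) (c : G.Walk z z), c.IsCycle → k ≤ wlen ℓ c →
      ∀ x ∈ c.support, ∃ (p q : V) (h : G.Adj p q),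
        IsShortcut ℓ c (SimpleGraph.Walk.cons h SimpleGraph.Walk.nil) ∧ ℓ s(p, q) ≤ m ∧
        (cdist ℓ c p x < k / 2 ∨ cdist ℓ c q x < k / 2) :=
  edgeChordal_implies_denselyPathChordal_general G ℓ hMG k m hEC

end Chordality
end

section
/- Let P_3 be the path graph with adjacent vertices v_1, v_2, v_3 and let G be the Cartesian product graph ℤ □ P_3 with every edge of length 1. Then G is 3-densely (5,2)-path-chordal: for every cycle C in G with L(C) ≥ 5 and every vertex x of C, there is, within distance 5/2 of x in the length metric d_C, a shortcut vertex of C associated to a strict shortcut of length at most 2. -/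
/-!
Let `C` be a cycle of length at least `5` in `ℤ □ P₃`. If `C` uses a horizontal edge between
columns `n` and `n + 1`, then, since `C` crosses this cut an even number of times, it does so in
exactly two of the three rows. For two adjacent rows, the unit square they span is not all of `C`,
so one of its vertical sides is a chord. For the two outer rows, either a middle vertex is off `C`,
and its column is a strict shortcut of length `2`, or the middle horizontal edge is a chord. Either
way both ends of the horizontal edge are within distance `1` of a shortcut vertex. A vertex of an
outer row always has a horizontal `C`-edge, and a vertex of the middle row without one has a
`C`-neighbour in an outer row, so every vertex of `C` is within distance `2 < 5/2` of one.
-/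

open SimpleGraph

namespace Chordality

/-- The graph `ℤ`, where `a` and `a + 1` are adjacent. -/
def zline : SimpleGraph ℤ := SimpleGraph.fromRel fun a b => b = a + 1

/-- The Cartesian product graph `ℤ □ P₃`. -/
def GZP3 : SimpleGraph (ℤ × Fin 3) := zline.boxProd (SimpleGraph.pathGraph 3)

end Chordality

namespace Sym2

variable {V : Type*}

def crossesCut (f : V → Bool) : Sym2 V → Bool :=
  Sym2.lift ⟨fun a b => xor (f a) (f b), fun _ _ => Bool.xor_comm _ _⟩

@[simp] lemma crossesCut_mk (f : V → Bool) (a b : V) : crossesCut f s(a, b) = xor (f a) (f b) :=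
  rfl

end Sym2

namespace SimpleGraph.Walk

variable {V : Type*} {G : SimpleGraph V}

lemma IsCycle.exists_mem_edges_ne {z v : V} {c : G.Walk z z} (hc : c.IsCycle)
    (hv : v ∈ c.support) (a : V) : ∃ b, b ≠ a ∧ s(v, b) ∈ c.edges := by
  have htwo := hc.ncard_neighborSet_toSubgraph_eq_two hv
  obtain ⟨b, hb, hba⟩ := Set.exists_ne_of_one_lt_ncard (by rw [htwo]; norm_num) a
  exact ⟨b, hba, c.mem_edges_toSubgraph.1 (Subgraph.mem_edgeSet.2 hb)⟩

lemma IsCycle.eq_or_eq_of_mem_edges {z v a b t : V} {c : G.Walk z z} (hc : c.IsCycle)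
    (ha : s(v, a) ∈ c.edges) (hb : s(v, b) ∈ c.edges) (hab : a ≠ b)
    (ht : s(v, t) ∈ c.edges) : t = a ∨ t = b := by
  obtain ⟨x, y, -, hxy⟩ := Set.ncard_eq_two.1
    (hc.ncard_neighborSet_toSubgraph_eq_two (c.fst_mem_support_of_mem_edges ha))
  have hnbr : ∀ r, s(v, r) ∈ c.edges → r = x ∨ r = y := fun r hr => by
    have : r ∈ c.toSubgraph.neighborSet v :=
      Subgraph.mem_edgeSet.1 (c.mem_edges_toSubgraph.2 hr)
    rwa [hxy] at this
  rcases hnbr a ha with rfl | rfl <;> rcases hnbr b hb with rfl | rfl <;>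
    rcases hnbr t ht with rfl | rfl <;> simp_all

lemma support_subset_of_closed {u v : V} (w : G.Walk u v) {S : Set V}
    (hS : ∀ a ∈ S, ∀ t, s(a, t) ∈ w.edges → t ∈ S) (hu : u ∈ S) : ∀ a ∈ w.support, a ∈ S := by
  induction w with
  | nil => simpa using hu
  | cons h p ih =>
    simp only [edges_cons, List.mem_cons] at hS
    simp only [support_cons, List.mem_cons, forall_eq_or_imp]
    exact ⟨hu, ih (fun a ha t ht => hS a ha t (Or.inr ht)) (hS _ hu _ (Or.inl rfl))⟩

lemma IsCycle.length_le_card_of_closed {z x : V} {c : G.Walk z z} (hc : c.IsCycle)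
    {S : Finset V} (hS : ∀ a ∈ S, ∀ t, s(a, t) ∈ c.edges → t ∈ S)
    (hx : x ∈ c.support) (hxS : x ∈ S) : c.length ≤ S.card := by
  classical
  set c' := c.rotate x hx
  have hsub : ∀ a ∈ c'.support, a ∈ (S : Set V) :=
    c'.support_subset_of_closed (fun a ha t ht => hS a ha t ((c.rotate_edges x hx).mem_iff.1 ht))
      hxS
  calc c.length = c'.support.tail.length := by simp [c']
    _ = c'.support.tail.toFinset.card :=
      (List.toFinset_card_of_nodup (hc.rotate hx).support_nodup).symm
    _ ≤ S.card := Finset.card_le_card fun a ha =>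
      hsub a (List.mem_of_mem_tail (List.mem_toFinset.1 ha))

lemma IsCycle.length_le_four {z a b d e : V} {c : G.Walk z z} (hc : c.IsCycle)
    (hab : s(a, b) ∈ c.edges) (hbd : s(b, d) ∈ c.edges) (hde : s(d, e) ∈ c.edges)
    (hea : s(e, a) ∈ c.edges) (had : a ≠ d) (hbe : b ≠ e) : c.length ≤ 4 := by
  classical
  have swap : ∀ {x y : V}, s(x, y) ∈ c.edges → s(y, x) ∈ c.edges := fun h => Sym2.eq_swap ▸ h
  refine (hc.length_le_card_of_closed (S := {a, b, d, e}) ?_ (c.fst_mem_support_of_mem_edges hab)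
    (by simp)).trans Finset.card_le_four
  intro v hv t ht
  simp only [Finset.mem_insert, Finset.mem_singleton] at hv ⊢
  rcases hv with rfl | rfl | rfl | rfl
  · rcases hc.eq_or_eq_of_mem_edges hab (swap hea) hbe ht with rfl | rfl <;> simp
  · rcases hc.eq_or_eq_of_mem_edges (swap hab) hbd had ht with rfl | rfl <;> simp
  · rcases hc.eq_or_eq_of_mem_edges (swap hbd) hde hbe ht with rfl | rfl <;> simp
  · rcases hc.eq_or_eq_of_mem_edges (swap hde) hea had.symm ht with rfl | rfl <;> simp

lemma even_countP_crossesCut_iff (f : V → Bool) {u v : V} (w : G.Walk u v) :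
    Even (w.edges.countP (Sym2.crossesCut f)) ↔ f u = f v := by
  induction w with
  | nil => simp
  | @cons u m v h p ih =>
    rw [edges_cons, List.countP_cons, Sym2.crossesCut_mk]
    cases f u <;> cases hm : f m <;> cases hv : f v <;> simp_all [Nat.even_add_one]

end SimpleGraph.Walk

namespace Chordality

open Walk

section UnitLengths

variable {V : Type*} {G : SimpleGraph V} {z : V} {c : G.Walk z z}

lemma wlen_one {u v : V} (w : G.Walk u v) : wlen (fun _ => (1 : ℝ)) w = w.length := by
  rw [wlen, List.map_const', List.sum_replicate, w.length_edges, nsmul_eq_mul, mul_one]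

lemma exists_walkIn_s8 [DecidableEq V] {p q : V} (hp : p ∈ c.support) (hq : q ∈ c.support) :
    ∃ w : G.Walk p q, WalkIn c w := by
  refine ⟨(c.dropUntil p hp).append (c.takeUntil q hq), fun e he => ?_, fun a ha => ?_⟩
  · rcases List.mem_append.1 ((edges_append ..) ▸ he) with he | he
    · exact c.edges_dropUntil_subset_edges hp he
    · exact c.edges_takeUntil_subset_edges hq he
  · rcases (mem_support_append_iff ..).1 ha with ha | ha
    · exact c.support_dropUntil_subset_support hp ha
    · exact c.support_takeUntil_subset_support hq ha

lemma cdist_le_length {p q : V} (w : G.Walk p q) (hw : WalkIn c w) :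
    cdist (fun _ => (1 : ℝ)) c p q ≤ w.length :=
  csInf_le ⟨0, by rintro _ ⟨w', -, rfl⟩; rw [wlen_one]; positivity⟩ ⟨w, hw, wlen_one w⟩

lemma lt_cdist_of_forall_lt_length {p q : V} (hp : p ∈ c.support) (hq : q ∈ c.support) {k : ℕ}
    (h : ∀ w : G.Walk p q, WalkIn c w → k < w.length) :
    (k : ℝ) < cdist (fun _ => (1 : ℝ)) c p q := by
  classical
  obtain ⟨w, hw⟩ := exists_walkIn_s8 hp hq
  refine (lt_add_one (k : ℝ)).trans_le (le_csInf ⟨_, w, hw, rfl⟩ ?_)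
  rintro _ ⟨w, hw, rfl⟩
  rw [wlen_one]
  exact_mod_cast h w hw

lemma shortcutVertexLe_of_isPath {p q : V} {σ : G.Walk p q} (hσ : σ.IsPath)
    (hp : p ∈ c.support) (hq : q ∈ c.support)
    (hmeet : ∀ a ∈ σ.support, a ∈ c.support → a = p ∨ a = q)
    (hshort : ∀ w : G.Walk p q, WalkIn c w → σ.length < w.length) {m : ℝ}
    (hm : (σ.length : ℝ) ≤ m) :
    ShortcutVertexLe (fun _ => (1 : ℝ)) c m p ∧ ShortcutVertexLe (fun _ => (1 : ℝ)) c m q := by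
  have hσ' : IsStrictShortcut (fun _ => (1 : ℝ)) c σ :=
    ⟨⟨hσ, hp, hq, (wlen_one σ).symm ▸ lt_cdist_of_forall_lt_length hp hq hshort⟩, hmeet⟩
  have hlen : wlen (fun _ => (1 : ℝ)) σ ≤ m := (wlen_one σ).symm ▸ hm
  exact ⟨⟨p, q, σ, hσ', hlen, .inl rfl⟩, ⟨p, q, σ, hσ', hlen, .inr rfl⟩⟩

lemma shortcutVertexLe_of_adj_of_notMem_edges {p q : V} (hpq : G.Adj p q)
    (hp : p ∈ c.support) (hq : q ∈ c.support) (hchord : s(p, q) ∉ c.edges) {m : ℝ} (hm : 1 ≤ m) :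
    ShortcutVertexLe (fun _ => (1 : ℝ)) c m p ∧ ShortcutVertexLe (fun _ => (1 : ℝ)) c m q := by
  refine shortcutVertexLe_of_isPath (σ := cons hpq nil) (by simp [hpq.ne]) hp hq
    (by simp) ?_ (by simpa using hm)
  intro w hw
  cases w with
  | nil => exact absurd rfl hpq.ne
  | cons h w =>
    cases w with
    | nil => exact absurd (hw.1 _ (by simp)) hchord
    | cons => simp

lemma shortcutVertexLe_of_adj_adj {p r q : V} (hpr : G.Adj p r) (hrq : G.Adj r q)
    (hp : p ∈ c.support) (hq : q ∈ c.support) (hpq : p ≠ q) (hnadj : ¬G.Adj p q)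
    (hmid : ∀ r', G.Adj p r' → G.Adj r' q → r' ∉ c.support) {m : ℝ} (hm : 2 ≤ m) :
    ShortcutVertexLe (fun _ => (1 : ℝ)) c m p ∧ ShortcutVertexLe (fun _ => (1 : ℝ)) c m q := by
  refine shortcutVertexLe_of_isPath (σ := cons hpr (cons hrq nil))
    (by simp [hpr.ne, hrq.ne, hpq]) hp hq ?_ ?_ (by simpa using hm)
  · intro a ha hac
    simp only [support_cons, support_nil, List.mem_cons, List.not_mem_nil, or_false] at ha
    rcases ha with rfl | rfl | rfl
    · exact .inl rfl
    · exact absurd hac (hmid a hpr hrq)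
    · exact .inr rfl
  · intro w hw
    cases w with
    | nil => exact absurd rfl hpq
    | cons h w =>
      cases w with
      | nil => exact absurd h hnadj
      | cons h' w =>
        cases w with
        | nil => exact absurd (hw.2 _ (by simp)) (hmid _ h h')
        | cons => simp

/-- The distance to the shortcut vertex is witnessed by a walk inside `c` rather than bounded
through `cdist`, so that it adds up along edges of `c`. -/
def ShortcutVertexWithin (c : G.Walk z z) (m : ℝ) (r : ℕ) (x : V) : Prop :=
  ∃ v, ShortcutVertexLe (fun _ => (1 : ℝ)) c m v ∧ ∃ w : G.Walk v x, WalkIn c w ∧ w.length ≤ r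

namespace ShortcutVertexWithin

variable {m : ℝ} {r : ℕ} {x y : V}

lemma of_shortcutVertexLe (hx : x ∈ c.support) (h : ShortcutVertexLe (fun _ => (1 : ℝ)) c m x) :
    ShortcutVertexWithin c m r x :=
  ⟨x, h, nil, ⟨by simp, by simpa using hx⟩, by simp⟩

lemma mono (h : ShortcutVertexWithin c m r x) {s : ℕ} (hrs : r ≤ s) :
    ShortcutVertexWithin c m s x :=
  let ⟨v, hv, w, hw, hlen⟩ := h
  ⟨v, hv, w, hw, hlen.trans hrs⟩

lemma of_mem_edges (h : ShortcutVertexWithin c m r y) (he : s(y, x) ∈ c.edges) :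
    ShortcutVertexWithin c m (r + 1) x := by
  obtain ⟨v, hv, w, ⟨hwe, hws⟩, hlen⟩ := h
  refine ⟨v, hv, w.concat (c.adj_of_mem_edges he), ⟨fun e he' => ?_, fun a ha => ?_⟩, by simpa⟩
  · rw [edges_concat, List.concat_eq_append, List.mem_append, List.mem_singleton] at he'
    rcases he' with he' | rfl
    exacts [hwe e he', he]
  · rw [support_concat, List.mem_append, List.mem_singleton] at ha
    rcases ha with ha | rfl
    exacts [hws a ha, c.snd_mem_support_of_mem_edges he]

lemma of_adj (hxy : G.Adj x y) (hx : x ∈ c.support) (hy : y ∈ c.support)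
    (h : ShortcutVertexLe (fun _ => (1 : ℝ)) c m y) (hm : 1 ≤ m) :
    ShortcutVertexWithin c m 1 x := by
  by_cases he : s(y, x) ∈ c.edges
  · exact (of_shortcutVertexLe (r := 0) hy h).of_mem_edges he
  · exact of_shortcutVertexLe hx
      (shortcutVertexLe_of_adj_of_notMem_edges hxy hx hy (fun h' => he (Sym2.eq_swap ▸ h')) hm).1

lemma exists_cdist_le (h : ShortcutVertexWithin c m r x) :
    ∃ v, ShortcutVertexLe (fun _ => (1 : ℝ)) c m v ∧ cdist (fun _ => (1 : ℝ)) c v x ≤ r :=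
  let ⟨v, hv, w, hw, hlen⟩ := h
  ⟨v, hv, (cdist_le_length w hw).trans (by exact_mod_cast hlen)⟩

end ShortcutVertexWithin

end UnitLengths

lemma zline_adj {a b : ℤ} : zline.Adj a b ↔ b = a + 1 ∨ a = b + 1 := by
  rw [zline, fromRel_adj]
  omega

lemma gzp3_adj {x y : ℤ × Fin 3} :
    GZP3.Adj x y ↔ (y.1 = x.1 + 1 ∨ x.1 = y.1 + 1) ∧ x.2 = y.2 ∨
      (x.2.val + 1 = y.2.val ∨ y.2.val + 1 = x.2.val) ∧ x.1 = y.1 := by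
  rw [GZP3, boxProd_adj, zline_adj, pathGraph_adj]

lemma gzp3_adj_succ (n : ℤ) (j : Fin 3) : GZP3.Adj (n, j) (n + 1, j) :=
  boxProd_adj_left.2 (zline_adj.2 (.inl rfl))

variable {z : ℤ × Fin 3} {c : GZP3.Walk z z}

def crossingRows (c : GZP3.Walk z z) (n : ℤ) : Finset (Fin 3) :=
  Finset.univ.filter fun j => s((n, j), (n + 1, j)) ∈ c.edges

lemma countP_crossesCut_eq_card_crossingRows (hc : c.IsTrail) (n : ℤ) :
    c.edges.countP (Sym2.crossesCut fun v => decide (v.1 ≤ n)) = (crossingRows c n).card := by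
  have hinj : Function.Injective fun j : Fin 3 => s(((n, j) : ℤ × Fin 3), (n + 1, j)) := by
    intro j j' h
    simp only [Sym2.eq_iff, Prod.mk.injEq] at h
    omega
  rw [List.countP_eq_length_filter, ← List.toFinset_card_of_nodup (hc.edges_nodup.filter _),
    ← Finset.card_image_of_injective _ hinj]
  congr 1
  ext e
  simp only [List.mem_toFinset, List.mem_filter, Finset.mem_image, crossingRows,
    Finset.mem_filter, Finset.mem_univ, true_and]
  constructor
  · induction e with | _ a b => ?_
    obtain ⟨a, i⟩ := a
    obtain ⟨b, k⟩ := b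
    rintro ⟨he, hcut⟩
    have hcross : (a = n ∧ b = n + 1 ∨ b = n ∧ a = n + 1) ∧ i = k := by
      rcases gzp3_adj.1 (c.adj_of_mem_edges he) with ⟨hab, rfl⟩ | ⟨-, rfl : a = b⟩
      · refine ⟨?_, rfl⟩
        by_cases ha : a ≤ n <;> by_cases hb : b ≤ n <;> simp_all <;> omega
      · simp at hcut
    rcases hcross with ⟨⟨rfl, rfl⟩ | ⟨rfl, rfl⟩, rfl⟩
    exacts [⟨i, he, rfl⟩, ⟨i, Sym2.eq_swap ▸ he, Sym2.eq_swap⟩]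
  · rintro ⟨j, hj, rfl⟩
    exact ⟨hj, by simp⟩

lemma card_crossingRows_eq_two (hc : c.IsTrail) {n : ℤ} {j : Fin 3}
    (he : s(((n, j) : ℤ × Fin 3), (n + 1, j)) ∈ c.edges) : (crossingRows c n).card = 2 := by
  have heven : Even (crossingRows c n).card :=
    countP_crossesCut_eq_card_crossingRows hc n ▸ (c.even_countP_crossesCut_iff _).2 rfl
  have hpos : 0 < (crossingRows c n).card :=
    Finset.card_pos.2 ⟨j, by simpa [crossingRows] using he⟩
  have hle : (crossingRows c n).card ≤ 3 := (Finset.card_le_univ _).trans_eq (Fintype.card_fin 3)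
  obtain ⟨k, hk⟩ := heven
  omega

lemma shortcutVertexLe_column {n : ℤ} {j : Fin 3} (hj : j ≠ 1)
    (h : ((n, j) : ℤ × Fin 3) ∈ c.support) (h' : ((n, 2 - j) : ℤ × Fin 3) ∈ c.support)
    (h1 : ((n, 1) : ℤ × Fin 3) ∉ c.support) : ShortcutVertexLe (fun _ => (1 : ℝ)) c 2 (n, j) := by
  refine (shortcutVertexLe_of_adj_adj (r := (n, 1)) ?_ ?_ h h' ?_ ?_ ?_ le_rfl).1
  · fin_cases j <;> simp_all [gzp3_adj]
  · fin_cases j <;> simp_all [gzp3_adj]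
  · fin_cases j <;> simp_all
  · fin_cases j <;> simp_all [gzp3_adj]
  · rintro ⟨a, k⟩ ha hb
    have hmid : ((a, k) : ℤ × Fin 3) = (n, 1) := by
      rw [gzp3_adj] at ha hb
      fin_cases j <;> fin_cases k <;> simp_all
    exact hmid ▸ h1

lemma shortcutVertexWithin_of_square (hc : c.IsCycle) (h5 : 5 ≤ c.length) {n : ℤ}
    {j j' : Fin 3} (hjj' : (pathGraph 3).Adj j j')
    (he : s(((n, j) : ℤ × Fin 3), (n + 1, j)) ∈ c.edges)
    (he' : s(((n, j') : ℤ × Fin 3), (n + 1, j')) ∈ c.edges) :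
    ShortcutVertexWithin c 2 1 (n, j) ∧ ShortcutVertexWithin c 2 1 (n + 1, j) := by
  have hL : GZP3.Adj (n, j) (n, j') := boxProd_adj_right.2 hjj'
  have hR : GZP3.Adj (n + 1, j) (n + 1, j') := boxProd_adj_right.2 hjj'
  have hH := gzp3_adj_succ n j
  have hx := c.fst_mem_support_of_mem_edges he
  have hy := c.snd_mem_support_of_mem_edges he
  by_cases hl : s(((n, j) : ℤ × Fin 3), (n, j')) ∈ c.edges
  · by_cases hr : s(((n + 1, j) : ℤ × Fin 3), (n + 1, j')) ∈ c.edges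
    · have h4 := hc.length_le_four he hr (Sym2.eq_swap ▸ he') (Sym2.eq_swap ▸ hl)
        (by simp) (by simp)
      omega
    · have hv := (shortcutVertexLe_of_adj_of_notMem_edges hR hy
        (c.snd_mem_support_of_mem_edges he') hr one_le_two).1
      exact ⟨.of_adj hH hx hy hv one_le_two, .of_shortcutVertexLe hy hv⟩
  · have hv := (shortcutVertexLe_of_adj_of_notMem_edges hL hx
      (c.fst_mem_support_of_mem_edges he') hl one_le_two).1
    exact ⟨.of_shortcutVertexLe hx hv, .of_adj hH.symm hy hx hv one_le_two⟩

lemma shortcutVertexWithin_of_outer_rows {n : ℤ} {j : Fin 3} (hj : j ≠ 1)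
    (he : s(((n, j) : ℤ × Fin 3), (n + 1, j)) ∈ c.edges)
    (he' : s(((n, 2 - j) : ℤ × Fin 3), (n + 1, 2 - j)) ∈ c.edges)
    (h1 : s(((n, 1) : ℤ × Fin 3), (n + 1, 1)) ∉ c.edges) :
    ShortcutVertexWithin c 2 1 (n, j) ∧ ShortcutVertexWithin c 2 1 (n + 1, j) := by
  have hH := gzp3_adj_succ n j
  have hV : ∀ m : ℤ, GZP3.Adj (m, j) (m, 1) := fun m =>
    boxProd_adj_right.2 (by fin_cases j <;> simp_all [pathGraph_adj])
  have hx := c.fst_mem_support_of_mem_edges he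
  have hy := c.snd_mem_support_of_mem_edges he
  by_cases hm : ((n, 1) : ℤ × Fin 3) ∈ c.support
  · by_cases hm' : ((n + 1, 1) : ℤ × Fin 3) ∈ c.support
    · obtain ⟨hv, hv'⟩ :=
        shortcutVertexLe_of_adj_of_notMem_edges (gzp3_adj_succ n 1) hm hm' h1 one_le_two
      exact ⟨.of_adj (hV n) hx hm hv one_le_two, .of_adj (hV (n + 1)) hy hm' hv' one_le_two⟩
    · have hv := shortcutVertexLe_column hj hy (c.snd_mem_support_of_mem_edges he') hm'
      exact ⟨.of_adj hH hx hy hv one_le_two, .of_shortcutVertexLe hy hv⟩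
  · have hv := shortcutVertexLe_column hj hx (c.fst_mem_support_of_mem_edges he') hm
    exact ⟨.of_shortcutVertexLe hx hv, .of_adj hH.symm hy hx hv one_le_two⟩

lemma shortcutVertexWithin_of_horizontal (hc : c.IsCycle) (h5 : 5 ≤ c.length) {n : ℤ}
    {j : Fin 3} (he : s(((n, j) : ℤ × Fin 3), (n + 1, j)) ∈ c.edges) :
    ShortcutVertexWithin c 2 1 (n, j) ∧ ShortcutVertexWithin c 2 1 (n + 1, j) := by
  have hcard := card_crossingRows_eq_two hc.isTrail he
  obtain ⟨j', hj', hne⟩ := Finset.exists_mem_ne (s := crossingRows c n) (by omega) j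
  have he' : s(((n, j') : ℤ × Fin 3), (n + 1, j')) ∈ c.edges := by
    simpa [crossingRows] using hj'
  by_cases hadj : (pathGraph 3).Adj j j'
  · exact shortcutVertexWithin_of_square hc h5 hadj he he'
  · obtain ⟨hj, rfl⟩ : j ≠ 1 ∧ j' = 2 - j := by
      fin_cases j <;> fin_cases j' <;> simp_all [pathGraph_adj]
    refine shortcutVertexWithin_of_outer_rows hj he he' fun h1 => ?_
    have huniv : crossingRows c n = Finset.univ := Finset.eq_univ_of_forall fun k => by
      fin_cases j <;> fin_cases k <;> simp_all [crossingRows]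
    simp [huniv] at hcard

lemma shortcutVertexWithin_of_mem_edges_of_snd_eq (hc : c.IsCycle) (h5 : 5 ≤ c.length)
    {x y : ℤ × Fin 3} (he : s(x, y) ∈ c.edges) (hrow : x.2 = y.2) :
    ShortcutVertexWithin c 2 1 x := by
  obtain ⟨a, i⟩ := x
  obtain ⟨b, k⟩ := y
  obtain rfl : i = k := hrow
  rcases gzp3_adj.1 (c.adj_of_mem_edges he) with ⟨rfl | rfl, -⟩ | ⟨h, -⟩
  · exact (shortcutVertexWithin_of_horizontal hc h5 he).1
  · exact (shortcutVertexWithin_of_horizontal hc h5 (Sym2.eq_swap ▸ he)).2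
  · simp at h

lemma shortcutVertexWithin_of_snd_ne_one (hc : c.IsCycle) (h5 : 5 ≤ c.length)
    {x : ℤ × Fin 3} (hx : x ∈ c.support) (hrow : x.2 ≠ 1) : ShortcutVertexWithin c 2 1 x := by
  obtain ⟨y, hy, he⟩ := hc.exists_mem_edges_ne hx (x.1, 1)
  refine shortcutVertexWithin_of_mem_edges_of_snd_eq hc h5 he ?_
  obtain ⟨a, i⟩ := x
  obtain ⟨b, k⟩ := y
  rcases gzp3_adj.1 (c.adj_of_mem_edges he) with ⟨-, h⟩ | ⟨h, rfl : a = b⟩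
  · exact h
  · fin_cases i <;> fin_cases k <;> simp_all

lemma shortcutVertexWithin_two (hc : c.IsCycle) (h5 : 5 ≤ c.length) {x : ℤ × Fin 3}
    (hx : x ∈ c.support) : ShortcutVertexWithin c 2 2 x := by
  by_cases hrow : x.2 = 1
  · obtain ⟨y, -, he⟩ := hc.exists_mem_edges_ne hx x
    by_cases hy : y.2 = 1
    · exact (shortcutVertexWithin_of_mem_edges_of_snd_eq hc h5 he (hrow.trans hy.symm)).mono
        one_le_two
    · exact (shortcutVertexWithin_of_snd_ne_one hc h5 (c.snd_mem_support_of_mem_edges he)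
        hy).of_mem_edges (Sym2.eq_swap ▸ he)
  · exact (shortcutVertexWithin_of_snd_ne_one hc h5 hx hrow).mono one_le_two

/-- The Cartesian product graph `G = ℤ □ P₃` with all edges of length
`1` is `3`-densely `(5,2)`-path-chordal: for every cycle `C` in `G` with `L(C) ≥ 5` and
every vertex `x` of `C`, there is, within distance `5/2` of `x` in the length metric
`d_C`, a shortcut vertex of `C` associated to a strict shortcut of length at most `2`. -/
theorem zline_boxProd_path3_denselyPathChordal :
    DenselyPathChordal GZP3 (fun _ => (1 : ℝ)) 3 5 2 ∧
    ∀ (z : ℤ × Fin 3) (c : GZP3.Walk z z), c.IsCycle → 5 ≤ wlen (fun _ => (1 : ℝ)) c →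
      ∀ x ∈ c.support, ∃ v, ShortcutVertexLe (fun _ => (1 : ℝ)) c 2 v ∧
        cdist (fun _ => (1 : ℝ)) c v x < 5 / 2 := by
  have dense : ∀ (z : ℤ × Fin 3) (c : GZP3.Walk z z), c.IsCycle →
      5 ≤ wlen (fun _ => (1 : ℝ)) c → ∀ x ∈ c.support,
      ∃ v, ShortcutVertexLe (fun _ => (1 : ℝ)) c 2 v ∧ cdist (fun _ => (1 : ℝ)) c v x < 5 / 2 := by
    intro z c hc hlen x hx
    rw [wlen_one] at hlen
    obtain ⟨v, hv, hd⟩ :=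
      (shortcutVertexWithin_two hc (by exact_mod_cast hlen) hx).exists_cdist_le
    exact ⟨v, hv, by push_cast at hd; linarith⟩
  refine ⟨fun z c hc hlen x hx => ?_, dense⟩
  obtain ⟨v, hv, hd⟩ := dense z c hc hlen x hx
  exact ⟨v, hv, by linarith⟩

end Chordality
end

section
/- Let X be the hyperbolic approximation of the Euclidean real line with parameter r = 1/6 and with A_k = {m·r^k : m ∈ ℤ} for each k ∈ ℤ, all edges of length 1. For n ∈ ℕ let v_0, …, v_{6^n} be the level-0 vertices with B(v_i) = B(i, 2), let v'_k, v''_k (for 0 < k < n) be the level-(−k) vertices with B(v'_k) = B(6^k, 2·6^k) and B(v''_k) = B(6^n − 6^k, 2·6^k), and let γ be the path from v_0 to v_{6^n} consisting of the radial geodesic from v_0 through v'_1, …, up to v'_{n−1}, the horizontal edge v'_{n−1} v''_{n−1}, and the radial geodesic from v''_{n−1} down through v''_1 to v_{6^n}. Then γ is a geodesic in X; in particular d(v_0, v_{6^n}) = L(γ) = 2n − 1. -/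
open SimpleGraph

namespace Chordality

/-- The center in `ℝ` of the ball corresponding to the vertex `(k, m)` of the hyperbolic
approximation of `ℝ` with parameter `r = 1/6` and `A_k = {m · r^k : m ∈ ℤ}`:
the vertex `(k, m)` corresponds to the ball `B(m · 6⁻ᵏ, 2 · 6⁻ᵏ)`. -/
noncomputable def hcenter (v : ℤ × ℤ) : ℝ := (v.2 : ℝ) * (6 : ℝ) ^ (-v.1)

/-- The radius of the ball corresponding to the vertex `(k, m)`. -/
noncomputable def hradius (v : ℤ × ℤ) : ℝ := 2 * (6 : ℝ) ^ (-v.1)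

/-- The hyperbolic approximation of the Euclidean real line with parameter `r = 1/6` and
`A_k = {m · r^k : m ∈ ℤ}`: vertices of level `k` are the balls `B(m · 6⁻ᵏ, 2 · 6⁻ᵏ)`;
two vertices are adjacent iff they lie on the same level and their closed balls
intersect (a horizontal edge), or they lie on neighboring levels and the ball of the
upper level is contained in the ball of the lower level (a radial edge). -/
noncomputable def hyperApprox : SimpleGraph (ℤ × ℤ) :=
  SimpleGraph.fromRel fun u v =>
    (u.1 = v.1 ∧ |hcenter u - hcenter v| ≤ hradius u + hradius v) ∨
    (v.1 = u.1 + 1 ∧ Metric.ball (hcenter v) (hradius v) ⊆ Metric.ball (hcenter u) (hradius u))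

end Chordality

/-!
In the coordinates `(k, m)` of the vertices, two vertices of one level are adjacent when
`|m - m'| ≤ 4`, and `(k + 1, m)` is adjacent to `(k, m')` when `|m - 6 m'| ≤ 10`, which settles
every edge of `γ`.

For the lower bound, follow a walk from level `0` that reaches scale `6^M`: `2M` of its edges
are needed to climb there and back, and each of the others enlarges the hull of the balls of
its endpoints by at most the diameter `4 · 6^M` of a top-level ball. A walk of length `L` from
`B(0, 2)` to `B(6^n, 2)` thus gives `6^n + 4 ≤ 4 · 6^M (L - 2M + 1)`, while for `L ≤ 2n - 2`
the right side is at most `4 · 6^M (2(n - M) - 1) ≤ 6^n`.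
-/

namespace Real

lemma abs_sub_add_le_of_ball_subset {c c' r r' : ℝ} (hr : 0 < r)
    (h : Metric.ball c r ⊆ Metric.ball c' r') : |c - c'| + r ≤ r' := by
  rw [ball_eq_Ioo, ball_eq_Ioo, Set.Ioo_subset_Ioo_iff (by linarith)] at h
  have := abs_sub_le_iff.2 (⟨by linarith, by linarith⟩ : c - c' ≤ r' - r ∧ c' - c ≤ r' - r)
  linarith

end Real

namespace List

lemma isChain_map_range {α : Type*} {R : α → α → Prop} {f : ℕ → α} {N : ℕ}
    (h : ∀ i, i + 1 < N → R (f i) (f (i + 1))) : ((List.range N).map f).IsChain R := by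
  rw [isChain_map, isChain_range]
  exact fun i hi => h i (by omega)

lemma IsChain.exists_walk_support_eq {V : Type*} {G : SimpleGraph V} {l : List V} {u v : V}
    (h : l.IsChain G.Adj) (hne : l ≠ []) (hu : l.head hne = u) (hv : l.getLast hne = v) :
    ∃ γ : G.Walk u v, γ.support = l :=
  ⟨(SimpleGraph.Walk.ofSupport l hne h).copy hu hv, by simp⟩

end List

namespace Chordality

lemma hradius_pos (v : ℤ × ℤ) : 0 < hradius v := by
  unfold hradius; positivity

lemma hyperApprox_adj_of_fst_eq {u v : ℤ × ℤ} (hlev : u.1 = v.1) (hne : u.2 ≠ v.2)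
    (h : |u.2 - v.2| ≤ 4) : hyperApprox.Adj u v := by
  rw [hyperApprox, fromRel_adj]
  refine ⟨fun huv => hne (congrArg Prod.snd huv), Or.inl (Or.inl ⟨hlev, ?_⟩)⟩
  have h' : |(u.2 : ℝ) - v.2| ≤ 4 := by exact_mod_cast h
  have hs : (0 : ℝ) < 6 ^ (-v.1) := by positivity
  rw [hcenter, hcenter, hradius, hradius, hlev, ← sub_mul, abs_mul, abs_of_pos hs]
  nlinarith

lemma hyperApprox_adj_of_fst_eq_add_one {u v : ℤ × ℤ} (hlev : u.1 = v.1 + 1)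
    (h : |u.2 - 6 * v.2| ≤ 10) : hyperApprox.Adj u v := by
  rw [hyperApprox, fromRel_adj]
  refine ⟨fun huv => by simp [huv] at hlev, Or.inr (Or.inr ⟨hlev, Metric.ball_subset_ball' ?_⟩)⟩
  have h' : |(u.2 : ℝ) - 6 * v.2| ≤ 10 := by exact_mod_cast h
  have hs : (0 : ℝ) < 6 ^ (-u.1) := by positivity
  have hscale : (6 : ℝ) ^ (-v.1) = 6 ^ (-u.1) * 6 := by
    rw [← zpow_add_one₀ (by norm_num)]; congr 1; omega
  rw [hcenter, hcenter, hradius, hradius, Real.dist_eq, hscale,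
    show (u.2 : ℝ) * 6 ^ (-u.1) - v.2 * (6 ^ (-u.1) * 6) = (u.2 - 6 * v.2) * 6 ^ (-u.1) by ring,
    abs_mul, abs_of_pos hs]
  nlinarith

lemma hyperApprox_adj_trichotomy {u v : ℤ × ℤ} (h : hyperApprox.Adj u v) :
    (u.1 = v.1 ∧ |hcenter u - hcenter v| ≤ hradius u + hradius v) ∨
    (u.1 = v.1 + 1 ∧ |hcenter u - hcenter v| + hradius u ≤ hradius v) ∨
    (v.1 = u.1 + 1 ∧ |hcenter u - hcenter v| + hradius v ≤ hradius u) := by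
  rw [hyperApprox, fromRel_adj] at h
  obtain ⟨-, (⟨hlev, hc⟩ | ⟨hlev, hsub⟩) | (⟨hlev, hc⟩ | ⟨hlev, hsub⟩)⟩ := h
  · exact .inl ⟨hlev, hc⟩
  · have := Real.abs_sub_add_le_of_ball_subset (hradius_pos v) hsub
    exact .inr (.inr ⟨hlev, by rwa [abs_sub_comm] at this⟩)
  · exact .inl ⟨hlev.symm, by rw [abs_sub_comm]; linarith⟩
  · exact .inr (.inl ⟨hlev, Real.abs_sub_add_le_of_ball_subset (hradius_pos u) hsub⟩)

/-- `6^M` is the top scale reached by a walk of length `L` from `u` to `v`, and `h` counts its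
edges beyond the `(M + u.1) + (M + v.1)` radial ones needed to climb there and back. -/
def SpreadBound (u v : ℤ × ℤ) (L : ℕ) : Prop :=
  ∃ (M : ℤ) (h : ℕ), -u.1 ≤ M ∧ -v.1 ≤ M ∧ (L : ℤ) = h + (M + u.1) + (M + v.1) ∧
    |hcenter u - hcenter v| + hradius u + hradius v ≤ 4 * 6 ^ M * (h + 1)

lemma spreadBound_nil (u : ℤ × ℤ) : SpreadBound u u 0 :=
  ⟨-u.1, 0, le_rfl, le_rfl, by simp, by simp [hradius]; linarith⟩

lemma SpreadBound.cons {u b v : ℤ × ℤ} {L : ℕ} (hub : hyperApprox.Adj u b)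
    (hb : SpreadBound b v L) : SpreadBound u v (L + 1) := by
  obtain ⟨M, h, hbM, hvM, hL, hspread⟩ := hb
  have htri := abs_sub_le (hcenter u) (hcenter b) (hcenter v)
  have hpos : (0 : ℝ) < 6 ^ M := by positivity
  rcases hyperApprox_adj_trichotomy hub with ⟨hlev, hc⟩ | ⟨hlev, hc⟩ | ⟨hlev, hc⟩
  · have hru : hradius u = hradius b := by simp only [hradius, hlev]
    have hrM : hradius u ≤ 2 * 6 ^ M := by
      rw [hradius]; gcongr; norm_num; omega
    refine ⟨M, h + 1, by omega, hvM, by push_cast; omega, ?_⟩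
    push_cast
    linarith
  · exact ⟨M, h, by omega, hvM, by push_cast; omega, by linarith⟩
  · have hrb : hradius u = 6 * hradius b := by
      rw [hradius, hradius, hlev, neg_add, zpow_add₀ (by norm_num)]; norm_num; ring
    by_cases huM : -u.1 ≤ M
    · have hrM : hradius u ≤ 2 * 6 ^ M := by
        rw [hradius]; gcongr; norm_num
      refine ⟨M, h + 2, huM, hvM, by push_cast; omega, ?_⟩
      push_cast
      nlinarith [hradius_pos b]
    · have hrM : hradius b = 2 * 6 ^ M := by rw [hradius]; congr 2; omega
      refine ⟨M + 1, h, by omega, by omega, by push_cast; omega, ?_⟩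
      rw [zpow_add_one₀ (by norm_num)]
      have hh : (0 : ℝ) ≤ h := h.cast_nonneg
      nlinarith

lemma spreadBound_walk {u v : ℤ × ℤ} (w : hyperApprox.Walk u v) : SpreadBound u v w.length := by
  induction w with
  | nil => exact spreadBound_nil _
  | cons hub _ ih => exact ih.cons hub

lemma eight_mul_le_six_pow_add_four : ∀ s : ℕ, 8 * s ≤ 6 ^ s + 4
  | 0 => by norm_num
  | 1 => by norm_num
  | s + 2 => by
    have ih := eight_mul_le_six_pow_add_four (s + 1)
    have : 1 ≤ 6 ^ (s + 1) := Nat.one_le_pow _ _ (by norm_num)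
    rw [pow_succ 6 (s + 1)]
    omega

lemma two_mul_sub_one_le_length (n : ℕ)
    (w : hyperApprox.Walk ((0 : ℤ), (0 : ℤ)) ((0 : ℤ), (6 : ℤ) ^ n)) : 2 * n - 1 ≤ w.length := by
  obtain ⟨M, h, hM, -, hL, hspread⟩ := spreadBound_walk w
  lift M to ℕ using by simpa using hM
  simp only [hcenter, hradius, neg_zero, zpow_zero, mul_one, Int.cast_zero, Int.cast_pow,
    Int.cast_ofNat, zero_sub, abs_neg, zpow_natCast] at hspread
  rw [abs_of_pos (by positivity)] at hspread
  have hspread' : 6 ^ n + 4 ≤ 4 * 6 ^ M * (h + 1) := by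
    have : ((6 ^ n + 4 : ℕ) : ℝ) ≤ ((4 * 6 ^ M * (h + 1) : ℕ) : ℝ) := by push_cast; linarith
    exact_mod_cast this
  by_contra hlt
  obtain ⟨s, rfl⟩ : ∃ s, n = M + s := ⟨n - M, by omega⟩
  have hs : 4 * (h + 1) ≤ 6 ^ s := by have := eight_mul_le_six_pow_add_four s; omega
  have : 4 * 6 ^ M * (h + 1) ≤ 6 ^ (M + s) := by
    rw [pow_add]; nlinarith [Nat.one_le_pow M 6 (by norm_num)]
  omega

def geodesicSupport (n : ℕ) : List (ℤ × ℤ) :=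
  (((0 : ℤ), (0 : ℤ)) ::
    (List.range (n - 1)).map (fun i : ℕ => ((-(i + 1 : ℤ)), (1 : ℤ)))) ++
    ((List.range (n - 1)).reverse.map
      (fun i : ℕ => ((-(i + 1 : ℤ)), (6 : ℤ) ^ (n - (i + 1)) - 1))) ++
    [((0 : ℤ), (6 : ℤ) ^ n)]

lemma length_geodesicSupport {n : ℕ} (hn : 1 ≤ n) : (geodesicSupport n).length = 2 * n := by
  simp only [geodesicSupport, List.length_append, List.length_cons, List.length_map,
    List.length_reverse, List.length_range, List.length_nil]
  omega

lemma isChain_geodesicSupport (N : ℕ) : (geodesicSupport (N + 2)).IsChain hyperApprox.Adj := by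
  rw [geodesicSupport, show N + 2 - 1 = N + 1 by omega]
  have hup : List.IsChain hyperApprox.Adj (((0 : ℤ), (0 : ℤ)) ::
      (List.range (N + 1)).map (fun i : ℕ => ((-(i + 1 : ℤ)), (1 : ℤ)))) := by
    refine List.isChain_cons.2 ⟨?_, List.isChain_map_range fun i _ => ?_⟩
    · simp only [List.head?_map, List.head?_range]
      rintro _ ⟨⟩
      exact hyperApprox_adj_of_fst_eq_add_one (by simp) (by simp)
    · exact hyperApprox_adj_of_fst_eq_add_one (by push_cast; ring) (by simp)
  have hdown : List.IsChain hyperApprox.Adj ((List.range (N + 1)).reverse.map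
      (fun i : ℕ => ((-(i + 1 : ℤ)), (6 : ℤ) ^ (N + 2 - (i + 1)) - 1))) := by
    rw [List.map_reverse, List.isChain_reverse]
    refine List.isChain_map_range fun i hi => ?_
    refine (hyperApprox_adj_of_fst_eq_add_one (by push_cast; ring) ?_).symm
    rw [show N + 2 - (i + 1) = N + 2 - (i + 1 + 1) + 1 by omega, pow_succ]
    ring_nf; norm_num
  refine (hup.append hdown ?_).append (List.isChain_singleton _) ?_
  · simp only [List.getLast?_cons, List.getLast?_map, List.getLast?_range, List.map_reverse,
      List.head?_reverse, Nat.add_one_ne_zero, ↓reduceIte, Option.map_some, Option.getD_some,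
      Nat.add_sub_cancel, Option.mem_def, Option.some.injEq]
    rintro _ rfl _ rfl
    simp only [show N + 2 - (N + 1) = 1 by omega]
    exact hyperApprox_adj_of_fst_eq rfl (by norm_num) (by norm_num)
  · simp only [List.getLast?_append, List.getLast?_map, List.getLast?_reverse, List.head?_range,
      Nat.add_one_ne_zero, ↓reduceIte, Option.map_some, Option.some_or,
      Option.mem_def, Option.some.injEq, List.head?_cons, forall_eq']
    refine (hyperApprox_adj_of_fst_eq_add_one (by simp) ?_).symm
    rw [show N + 2 - (0 + 1) = N + 1 by omega, pow_succ _ (N + 1)]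
    ring_nf; norm_num

/-- In the hyperbolic approximation `X` of the Euclidean line (parameter
`r = 1/6`, all edges of length `1`), for `n ≥ 2`, the path `γ` from `v_0 = (0,0)` to
`v_{6^n} = (0, 6^n)` consisting of the radial geodesic `v_0, v'_1, …, v'_{n-1}` (where
`v'_k = (-k, 1)` is the level `-k` vertex with ball `B(6^k, 2 · 6^k)`), the horizontal
edge `v'_{n-1} v''_{n-1}`, and the radial geodesic `v''_{n-1}, …, v''_1, v_{6^n}` (where
`v''_k = (-k, 6^(n-k) - 1)` has ball `B(6^n - 6^k, 2 · 6^k)`) is a geodesic; in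
particular `d(v_0, v_{6^n}) = L(γ) = 2n - 1`. -/
theorem hyperApprox_geodesic (n : ℕ) (hn : 2 ≤ n) :
    ∃ γ : hyperApprox.Walk ((0 : ℤ), (0 : ℤ)) ((0 : ℤ), (6 : ℤ) ^ n),
      γ.support =
        ((((0 : ℤ), (0 : ℤ)) ::
          (List.range (n - 1)).map (fun i : ℕ => ((-(i + 1 : ℤ)), (1 : ℤ)))) ++
          ((List.range (n - 1)).reverse.map
            (fun i : ℕ => ((-(i + 1 : ℤ)), (6 : ℤ) ^ (n - (i + 1)) - 1))) ++
          [((0 : ℤ), (6 : ℤ) ^ n)]) ∧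
      γ.length = 2 * n - 1 ∧
      γ.length = hyperApprox.dist ((0 : ℤ), (0 : ℤ)) ((0 : ℤ), (6 : ℤ) ^ n) := by
  obtain ⟨N, rfl⟩ : ∃ N, n = N + 2 := ⟨n - 2, by omega⟩
  obtain ⟨γ, hγ⟩ := (isChain_geodesicSupport N).exists_walk_support_eq
    (u := ((0 : ℤ), (0 : ℤ))) (v := ((0 : ℤ), (6 : ℤ) ^ (N + 2)))
    (by simp [geodesicSupport]) rfl (by simp [geodesicSupport])
  have hlength : γ.length = 2 * (N + 2) - 1 := by
    have := γ.length_support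
    rw [hγ, length_geodesicSupport (by omega)] at this
    omega
  refine ⟨γ, hγ, hlength, le_antisymm ?_ (dist_le γ)⟩
  obtain ⟨w, hw⟩ := γ.reachable.exists_walk_length_eq_dist
  have := two_mul_sub_one_le_length (N + 2) w
  omega

end Chordality
end
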